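/- Assume all external momenta are null, i.e. k_i·k_i = 0 for every i ∈ {1,…,n}. Then the ℓ²-deformed one-loop scattering equations are the residues of the quadratic form F: for every marked point a ∈ {1,…,n,+,−}, the limit of (σ − σ_a)·F(σ) as σ → σ_a (through values of σ distinct from all marked points) exists and equals E_a. In particular F has only simple poles at the marked points σ₁,…,σₙ, σ₊, σ₋. -/

import Mathlib

/-!
Write `w_a(σ) = 1/(σ − σ_a)`. Then `p·p − (ℓ·ℓ)ω₊₋²` is `2ω₊₋ ∑ⱼ (ℓ·kⱼ) wⱼ` plus the
off-diagonal part of `∑ᵢⱼ (kᵢ·kⱼ) wᵢwⱼ`, the diagonal dropping out because `kᵢ² = 0`; together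
with `(ℓ·ℓ) ω₊₋ ω_{1n}` the ℓ-dependent terms combine into `ω₊₋ ∑ⱼ cⱼ wⱼ`. The partial-fraction
identity `w_a w_b = (w_a − w_b)/(σ_a − σ_b)` turns every product of two simple poles into a
sum of simple poles, and collecting coefficients gives `F = ∑_a E_a w_a` over all marked points.
The residue of such a sum at `σ_a` is `E_a`.
-/

open Finset Filter Topology

/-- The ℓ²-deformed coefficients of the one-loop scattering equations:
`c₁ = 2ℓ·k₁ + ℓ·ℓ`, `cₙ = 2ℓ·kₙ − ℓ·ℓ`, and `c_i = 2ℓ·k_i` otherwise. -/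
noncomputable def defCoeff {V : Type*} [AddCommGroup V] [Module ℂ V]
    (B : LinearMap.BilinForm ℂ V) {n : ℕ} (k : Fin n → V) (ℓ : V) (i : Fin n) : ℂ :=
  2 * B ℓ (k i) + (if (i : ℕ) = 0 then B ℓ ℓ else 0)
    - (if (i : ℕ) = n - 1 then B ℓ ℓ else 0)

/-- The ℓ²-deformed one-loop scattering equation attached to the external marked point `σ i`. -/
noncomputable def scatEqExt {V : Type*} [AddCommGroup V] [Module ℂ V]
    (B : LinearMap.BilinForm ℂ V) {n : ℕ} (k : Fin n → V) (ℓ : V)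
    (σ : Fin n → ℂ) (σp σm : ℂ) (i : Fin n) : ℂ :=
  (∑ j ∈ univ.filter (· ≠ i), 2 * B (k i) (k j) / (σ i - σ j))
    + defCoeff B k ℓ i * (σp - σm) / ((σ i - σp) * (σ i - σm))

/-- The ℓ²-deformed one-loop scattering equation attached to the node point `σ₊`. -/
noncomputable def scatEqPlus {V : Type*} [AddCommGroup V] [Module ℂ V]
    (B : LinearMap.BilinForm ℂ V) {n : ℕ} (k : Fin n → V) (ℓ : V)
    (σ : Fin n → ℂ) (σp : ℂ) : ℂ :=
  ∑ j, defCoeff B k ℓ j / (σp - σ j)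

/-- The ℓ²-deformed one-loop scattering equation attached to the node point `σ₋`. -/
noncomputable def scatEqMinus {V : Type*} [AddCommGroup V] [Module ℂ V]
    (B : LinearMap.BilinForm ℂ V) {n : ℕ} (k : Fin n → V) (ℓ : V)
    (σ : Fin n → ℂ) (σm : ℂ) : ℂ :=
  - ∑ j, defCoeff B k ℓ j / (σm - σ j)

/-- The `V`-valued rational map `p(σ) = ℓ/(σ−σ₊) − ℓ/(σ−σ₋) + ∑ᵢ kᵢ/(σ−σᵢ)`. -/
noncomputable def pMap {V : Type*} [AddCommGroup V] [Module ℂ V] {n : ℕ}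
    (k : Fin n → V) (ℓ : V) (σ : Fin n → ℂ) (σp σm : ℂ) (s : ℂ) : V :=
  (s - σp)⁻¹ • ℓ - (s - σm)⁻¹ • ℓ + ∑ i, (s - σ i)⁻¹ • k i

/-- `ω_{ab}(σ) = (σ_a − σ_b)/((σ−σ_a)(σ−σ_b))`. -/
noncomputable def omegaAB (a b s : ℂ) : ℂ := (a - b) / ((s - a) * (s - b))

/-- The quadratic form `F(σ) = p(σ)·p(σ) − (ℓ·ℓ) ω₊₋(σ)² + (ℓ·ℓ) ω₊₋(σ) ω_{1n}(σ)`,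
where `σ1`, `σn` are the first and last external marked points. -/
noncomputable def quadForm {V : Type*} [AddCommGroup V] [Module ℂ V]
    (B : LinearMap.BilinForm ℂ V) {n : ℕ} (k : Fin n → V) (ℓ : V)
    (σ : Fin n → ℂ) (σp σm σ1 σn : ℂ) (s : ℂ) : ℂ :=
  B (pMap k ℓ σ σp σm s) (pMap k ℓ σ σp σm s)
    - B ℓ ℓ * omegaAB σp σm s ^ 2 + B ℓ ℓ * omegaAB σp σm s * omegaAB σ1 σn s

theorem inv_sub_mul_inv_sub {a b s : ℂ} (hab : a ≠ b) (hsa : s ≠ a) (hsb : s ≠ b) :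
    (s - a)⁻¹ * (s - b)⁻¹ = (a - b)⁻¹ * ((s - a)⁻¹ - (s - b)⁻¹) := by
  have := sub_ne_zero.2 hab
  have := sub_ne_zero.2 hsa
  have := sub_ne_zero.2 hsb
  field_simp
  ring

theorem omegaAB_eq_inv_sub_sub_inv_sub {a b s : ℂ} (hsa : s ≠ a) (hsb : s ≠ b) :
    omegaAB a b s = (s - a)⁻¹ - (s - b)⁻¹ := by
  have := sub_ne_zero.2 hsa
  have := sub_ne_zero.2 hsb
  rw [omegaAB]
  field_simp
  ring

theorem omegaAB_mul_inv_sub {a b c s : ℂ} (hca : c ≠ a) (hcb : c ≠ b)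
    (hsa : s ≠ a) (hsb : s ≠ b) (hsc : s ≠ c) :
    omegaAB a b s * (s - c)⁻¹ =
      omegaAB a b c * (s - c)⁻¹ + (a - c)⁻¹ * (s - a)⁻¹ - (b - c)⁻¹ * (s - b)⁻¹ := by
  have := sub_ne_zero.2 hca
  have := sub_ne_zero.2 hcb
  have := sub_ne_zero.2 hsa
  have := sub_ne_zero.2 hsb
  have := sub_ne_zero.2 hsc
  rw [omegaAB, omegaAB]
  field_simp
  ring

section

variable {ι : Type*} [Fintype ι]

theorem omegaAB_mul_sum_mul_inv_sub (c z : ι → ℂ) {a b s : ℂ} (hza : ∀ i, z i ≠ a)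
    (hzb : ∀ i, z i ≠ b) (hsa : s ≠ a) (hsb : s ≠ b) (hsz : ∀ i, s ≠ z i) :
    omegaAB a b s * ∑ i, c i * (s - z i)⁻¹ =
      ∑ i, c i * omegaAB a b (z i) * (s - z i)⁻¹ + (∑ i, c i / (a - z i)) * (s - a)⁻¹
        - (∑ i, c i / (b - z i)) * (s - b)⁻¹ := by
  rw [Finset.mul_sum, Finset.sum_mul, Finset.sum_mul, ← Finset.sum_add_distrib,
    ← Finset.sum_sub_distrib]
  refine Finset.sum_congr rfl fun i _ => ?_
  rw [mul_left_comm, omegaAB_mul_inv_sub (hza i) (hzb i) hsa hsb (hsz i)]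
  ring

variable [DecidableEq ι]

theorem sum_sum_ne_mul_inv_sub_mul_inv_sub {z : ι → ℂ} (hz : Function.Injective z)
    {C : ι → ι → ℂ} (hC : ∀ i j, C i j = C j i) {s : ℂ} (hs : ∀ i, s ≠ z i) :
    ∑ i, ∑ j ∈ univ.filter (· ≠ i), C i j * ((s - z i)⁻¹ * (s - z j)⁻¹) =
      ∑ i, (∑ j ∈ univ.filter (· ≠ i), 2 * C i j / (z i - z j)) * (s - z i)⁻¹ := by
  have hsplit : ∀ i, ∀ j ∈ univ.filter (· ≠ i), C i j * ((s - z i)⁻¹ * (s - z j)⁻¹) =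
      C i j / (z i - z j) * (s - z i)⁻¹ + C j i / (z j - z i) * (s - z j)⁻¹ := by
    intro i j hj
    have hji : j ≠ i := (Finset.mem_filter.1 hj).2
    rw [hC j i, inv_sub_mul_inv_sub (hz.ne hji.symm) (hs i) (hs j), div_eq_mul_inv,
      div_eq_mul_inv, ← neg_sub (z i) (z j), inv_neg]
    ring
  have hswap : ∑ i, ∑ j ∈ univ.filter (· ≠ i), C j i / (z j - z i) * (s - z j)⁻¹ =
      ∑ j, ∑ i ∈ univ.filter (· ≠ j), C j i / (z j - z i) * (s - z j)⁻¹ :=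
    Finset.sum_comm' fun i j => by simp [ne_comm]
  rw [Finset.sum_congr rfl fun i _ => (Finset.sum_congr rfl (hsplit i)).trans
      Finset.sum_add_distrib, Finset.sum_add_distrib, hswap, ← Finset.sum_add_distrib]
  refine Finset.sum_congr rfl fun i _ => ?_
  rw [← Finset.sum_add_distrib, Finset.sum_mul]
  exact Finset.sum_congr rfl fun j _ => by ring

variable {V : Type*} [AddCommGroup V] [Module ℂ V] (B : LinearMap.BilinForm ℂ V)

theorem bilin_smul_add_sum_smul_self (hsymm : ∀ u v : V, B u v = B v u) {k : ι → V}
    (hnull : ∀ i, B (k i) (k i) = 0) (ℓ : V) (c : ℂ) (w : ι → ℂ) :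
    B (c • ℓ + ∑ i, w i • k i) (c • ℓ + ∑ i, w i • k i) =
      c ^ 2 * B ℓ ℓ + 2 * c * ∑ i, B ℓ (k i) * w i
        + ∑ i, ∑ j ∈ univ.filter (· ≠ i), B (k i) (k j) * (w i * w j) := by
  set y := ∑ i, w i • k i
  have hℓy : B ℓ y = ∑ i, B ℓ (k i) * w i := by
    simp only [y, map_sum, map_smul, smul_eq_mul, mul_comm]
  have hyy : B y y = ∑ i, ∑ j ∈ univ.filter (· ≠ i), B (k i) (k j) * (w i * w j) := by
    simp only [y, map_sum, map_smul, LinearMap.sum_apply, LinearMap.smul_apply, smul_eq_mul]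
    refine Finset.sum_congr rfl fun i _ => ?_
    rw [Finset.sum_filter_of_ne fun j _ h hji => by simp [hji, hnull] at h, Finset.mul_sum]
    exact Finset.sum_congr rfl fun j _ => by rw [hsymm (k j) (k i)]; ring
  simp only [map_add, map_smul, LinearMap.add_apply, LinearMap.smul_apply, smul_eq_mul,
    hsymm y ℓ, hℓy, hyy]
  ring

end

section

theorem tendsto_sub_mul_inv_sub_nhdsNE (b c : ℂ) :
    Tendsto (fun s => (s - b) * (s - c)⁻¹) (𝓝[≠] b) (𝓝 (if b = c then 1 else 0)) := by
  split_ifs with hbc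
  · subst hbc
    refine tendsto_const_nhds.congr' ?_
    filter_upwards [self_mem_nhdsWithin] with s hs
    exact (mul_inv_cancel₀ (sub_ne_zero.2 hs)).symm
  · have h : ContinuousAt (fun s => (s - b) * (s - c)⁻¹) b :=
      (continuousAt_id.sub continuousAt_const).mul
        ((continuousAt_id.sub continuousAt_const).inv₀ (sub_ne_zero.2 hbc))
    simpa using h.tendsto.mono_left nhdsWithin_le_nhds

variable {ι : Type*} [Fintype ι] {z : ι → ℂ}

theorem tendsto_sub_mul_sum_mul_inv_sub (hz : Function.Injective z) (r : ι → ℂ) (x : ι) :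
    Tendsto (fun s => (s - z x) * ∑ a, r a * (s - z a)⁻¹) (𝓝[≠] (z x)) (𝓝 (r x)) := by
  classical
  have h : Tendsto (fun s => ∑ a, r a * ((s - z x) * (s - z a)⁻¹)) (𝓝[≠] (z x))
      (𝓝 (∑ a, r a * if x = a then 1 else 0)) :=
    tendsto_finsetSum _ fun a _ => by
      simpa only [hz.eq_iff] using (tendsto_sub_mul_inv_sub_nhdsNE (z x) (z a)).const_mul (r a)
  simp only [mul_ite, mul_one, mul_zero, Finset.sum_ite_eq, Finset.mem_univ, if_true] at h
  refine h.congr fun s => ?_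
  rw [Finset.mul_sum]
  exact Finset.sum_congr rfl fun a _ => by ring

theorem tendsto_sub_mul_of_eqOn_sum_mul_inv_sub (hz : Function.Injective z) {r : ι → ℂ}
    {f : ℂ → ℂ} (hf : Set.EqOn f (fun s => ∑ a, r a * (s - z a)⁻¹) (Set.range z)ᶜ) (x : ι) :
    Tendsto (fun s => (s - z x) * f s) (𝓝[(Set.range z)ᶜ] (z x)) (𝓝 (r x)) := by
  have hle : 𝓝[(Set.range z)ᶜ] (z x) ≤ 𝓝[≠] (z x) :=
    nhdsWithin_mono _ (Set.compl_subset_compl.2 (Set.singleton_subset_iff.2 ⟨x, rfl⟩))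
  refine ((tendsto_sub_mul_sum_mul_inv_sub hz r x).mono_left hle).congr' ?_
  filter_upwards [self_mem_nhdsWithin] with s hs
  rw [hf hs]

end

section

variable {V : Type*} [AddCommGroup V] [Module ℂ V] (B : LinearMap.BilinForm ℂ V) {n : ℕ}
  (k : Fin n → V) (ℓ : V)

theorem sum_defCoeff_mul (hn : 0 < n) (g : Fin n → ℂ) :
    ∑ j, defCoeff B k ℓ j * g j =
      2 * ∑ j, B ℓ (k j) * g j + B ℓ ℓ * (g ⟨0, hn⟩ - g ⟨n - 1, Nat.sub_lt hn one_pos⟩) := by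
  have hite : ∀ (m : ℕ) (hm : m < n),
      ∑ j : Fin n, (if (j : ℕ) = m then B ℓ ℓ else 0) * g j = B ℓ ℓ * g ⟨m, hm⟩ := by
    intro m hm
    rw [Finset.sum_eq_single ⟨m, hm⟩ (fun j _ hj => by rw [if_neg (hj ∘ Fin.ext), zero_mul])
      (by simp), if_pos rfl]
  simp only [defCoeff, add_mul, sub_mul, Finset.sum_add_distrib, Finset.sum_sub_distrib,
    Finset.mul_sum]
  rw [hite 0 hn, hite (n - 1) (Nat.sub_lt hn one_pos)]
  simp only [mul_assoc]
  ring

theorem scatEqExt_eq_add_defCoeff_mul_omegaAB (σ : Fin n → ℂ) (σp σm : ℂ) (i : Fin n) :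
    scatEqExt B k ℓ σ σp σm i =
      (∑ j ∈ univ.filter (· ≠ i), 2 * B (k i) (k j) / (σ i - σ j))
        + defCoeff B k ℓ i * omegaAB σp σm (σ i) := by
  rw [scatEqExt, omegaAB, mul_div_assoc]

theorem quadForm_eq_sum_mul_inv_sub (hsymm : ∀ u v : V, B u v = B v u)
    (hnull : ∀ i, B (k i) (k i) = 0) (hn : 0 < n) {σ : Fin n → ℂ} {σp σm : ℂ}
    (hinj : Function.Injective σ) (hp : ∀ i, σ i ≠ σp) (hm : ∀ i, σ i ≠ σm) {s : ℂ}
    (hs : ∀ i, s ≠ σ i) (hsp : s ≠ σp) (hsm : s ≠ σm) :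
    quadForm B k ℓ σ σp σm (σ ⟨0, hn⟩) (σ ⟨n - 1, Nat.sub_lt hn one_pos⟩) s =
      ∑ i, scatEqExt B k ℓ σ σp σm i * (s - σ i)⁻¹ + scatEqPlus B k ℓ σ σp * (s - σp)⁻¹
        + scatEqMinus B k ℓ σ σm * (s - σm)⁻¹ := by
  have hpMap : pMap k ℓ σ σp σm s = ((s - σp)⁻¹ - (s - σm)⁻¹) • ℓ + ∑ i, (s - σ i)⁻¹ • k i := by
    rw [pMap, sub_smul]
  have hω := omegaAB_mul_sum_mul_inv_sub (defCoeff B k ℓ) σ hp hm hsp hsm hs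
  rw [omegaAB_eq_inv_sub_sub_inv_sub hsp hsm, sum_defCoeff_mul B k ℓ hn] at hω
  rw [quadForm, hpMap, bilin_smul_add_sum_smul_self B hsymm hnull,
    sum_sum_ne_mul_inv_sub_mul_inv_sub hinj (fun i j => hsymm (k i) (k j)) hs,
    omegaAB_eq_inv_sub_sub_inv_sub hsp hsm, omegaAB_eq_inv_sub_sub_inv_sub (hs _) (hs _)]
  simp only [scatEqExt_eq_add_defCoeff_mul_omegaAB, add_mul, Finset.sum_add_distrib, scatEqPlus,
    scatEqMinus]
  linear_combination hω

end

/-- If all external momenta are null, the ℓ²-deformed one-loop scattering equations are the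
residues of the quadratic form `F` at the marked points: for every marked point `a`, the limit
of `(σ − σ_a)·F(σ)` as `σ → σ_a` through values distinct from all marked points exists and
equals `E_a`. -/
theorem ell2_deformed_scattering_equations_are_residues_of_quadratic_form
    {V : Type*} [AddCommGroup V] [Module ℂ V]
    (B : LinearMap.BilinForm ℂ V) (hsymm : ∀ u v : V, B u v = B v u)
    {n : ℕ} (hn : 2 ≤ n) (k : Fin n → V) (ℓ : V) (σ : Fin n → ℂ) (σp σm : ℂ)
    (hinj : Function.Injective σ)
    (hp : ∀ i, σ i ≠ σp) (hm : ∀ i, σ i ≠ σm) (hpm : σp ≠ σm)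
    (hnull : ∀ i, B (k i) (k i) = 0) :
    (∀ i : Fin n,
      Tendsto
        (fun s : ℂ => (s - σ i) *
          quadForm B k ℓ σ σp σm (σ ⟨0, by omega⟩) (σ ⟨n - 1, by omega⟩) s)
        (𝓝[(Set.range σ ∪ {σp, σm})ᶜ] (σ i))
        (𝓝 (scatEqExt B k ℓ σ σp σm i)))
    ∧ Tendsto
        (fun s : ℂ => (s - σp) *
          quadForm B k ℓ σ σp σm (σ ⟨0, by omega⟩) (σ ⟨n - 1, by omega⟩) s)
        (𝓝[(Set.range σ ∪ {σp, σm})ᶜ] σp)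
        (𝓝 (scatEqPlus B k ℓ σ σp))
    ∧ Tendsto
        (fun s : ℂ => (s - σm) *
          quadForm B k ℓ σ σp σm (σ ⟨0, by omega⟩) (σ ⟨n - 1, by omega⟩) s)
        (𝓝[(Set.range σ ∪ {σp, σm})ᶜ] σm)
        (𝓝 (scatEqMinus B k ℓ σ σm)) := by
  set z : Fin n ⊕ Fin 2 → ℂ := Sum.elim σ ![σp, σm]
  set r : Fin n ⊕ Fin 2 → ℂ :=
    Sum.elim (scatEqExt B k ℓ σ σp σm) ![scatEqPlus B k ℓ σ σp, scatEqMinus B k ℓ σ σm]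
  have hz : Function.Injective z := by
    refine hinj.sumElim ?_ fun i j => ?_
    · simp [Function.Injective, Fin.forall_fin_two, hpm, hpm.symm]
    · fin_cases j
      exacts [hp i, hm i]
  have hrange : Set.range z = Set.range σ ∪ {σp, σm} := by
    simp [z, Set.Sum.elim_range, Matrix.range_cons, Set.insert_comm]
  have hF : Set.EqOn (quadForm B k ℓ σ σp σm (σ ⟨0, by omega⟩) (σ ⟨n - 1, by omega⟩))
      (fun s => ∑ a, r a * (s - z a)⁻¹) (Set.range z)ᶜ := by
    intro s hs
    simp only [hrange, Set.mem_compl_iff, Set.mem_union, Set.mem_range, Set.mem_insert_iff,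
      Set.mem_singleton_iff, not_or, not_exists] at hs
    rw [quadForm_eq_sum_mul_inv_sub B k ℓ hsymm hnull (by omega) hinj hp hm
      (fun i h => hs.1 i h.symm) hs.2.1 hs.2.2]
    simp [z, r, Fintype.sum_sum_type, Fin.sum_univ_two, add_assoc]
  have hres := tendsto_sub_mul_of_eqOn_sum_mul_inv_sub hz hF
  rw [hrange] at hres
  exact ⟨fun i => hres (.inl i), hres (.inr 0), hres (.inr 1)⟩
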